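/- Let s = (s₁,s₂,s₃) ∈ ℝ³ with s₁,s₂,s₃ > 0. Then the following are equivalent: (i) p_r(s) ≥ 0 for all r = 1,2,3; (ii) there exist a = (a₁,a₂,a₃) ∈ ℝ³ and b = (b₁,b₂,b₃) ∈ ℝ³ such that for all r = 1,2,3 (indices mod 3): the 2×2 symmetric matrix B_r(s,a,b) is positive semidefinite, s_{r+1} + s_{r+2} - s_r + S(s)/(2s_r) + 3a_r ≥ 0, and a_r ≤ a_r⁰(s). (This is the matrix-level statement that g_s on W¹² has strongly nonnegative curvature if and only if it has sec ≥ 0.) -/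

import Mathlib

open Matrix

/-- `S(s) = 2(s₁s₂+s₁s₃+s₂s₃) - (s₁²+s₂²+s₃²)`. -/
noncomputable def Spoly (s : Fin 3 → ℝ) : ℝ :=
  2 * (s 0 * s 1 + s 0 * s 2 + s 1 * s 2) - (s 0 ^ 2 + s 1 ^ 2 + s 2 ^ 2)

/-- `p_r(s) = (s_{r+1}-s_{r+2})² + 2 s_r (s_{r+1}+s_{r+2}) - 3 s_r²`, indices mod 3. -/
noncomputable def ppoly (s : Fin 3 → ℝ) (r : Fin 3) : ℝ :=
  (s (r + 1) - s (r + 2)) ^ 2 + 2 * s r * (s (r + 1) + s (r + 2)) - 3 * s r ^ 2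

/-- `a_r⁰(s) = ((s_{r+1}-s_{r+2})² - s_r²)/(2 s_r)`, indices mod 3. -/
noncomputable def a0 (s : Fin 3 → ℝ) (r : Fin 3) : ℝ :=
  ((s (r + 1) - s (r + 2)) ^ 2 - s r ^ 2) / (2 * s r)

/-- The `r`-th 2×2 block `B_r(s,a,b)` of the modified curvature operator of `(W¹², g_s)`. -/
noncomputable def Bmat (s a b : Fin 3 → ℝ) (r : Fin 3) : Matrix (Fin 2) (Fin 2) ℝ :=
  !![4 * s (r + 1) - b (r + 1),   -Spoly s / s r + 2 * a r;
     -Spoly s / s r + 2 * a r,    4 * s (r + 2) + b (r + 2)]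

/-! The witness is `a = a⁰(s)`, `b = 0`. At `a_r = a_r⁰` the scalar condition of (ii) reads
`p_r(s) / s_r ≥ 0`, and since that condition is increasing in `a_r` while `a_r ≤ a_r⁰`, it
also gives back `p_r(s) ≥ 0`. For the blocks, write `s = (t², u², v²)`: the determinant of
`B_r(s, a⁰, 0)` is a positive multiple of
`(u² - v²)² ((u + v)² - t²) (t² - (u - v)²)`, and `p_r(s) ≥ 0` forces `t ≤ u + v`; so the three
conditions `p_r ≥ 0` say that `√s₁, √s₂, √s₃` satisfy the triangle inequalities, which is
exactly what makes every determinant nonnegative. -/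

lemma Matrix.posSemidef_of_sq_le_mul {A B c : ℝ} (hA : 0 ≤ A) (hB : 0 ≤ B)
    (h : c ^ 2 ≤ A * B) : (!![A, c; c, B]).PosSemidef := by
  refine .of_dotProduct_mulVec_nonneg
    (by ext i j; fin_cases i <;> fin_cases j <;> rfl) fun v ↦ ?_
  have hq : star v ⬝ᵥ !![A, c; c, B] *ᵥ v = A * v 0 ^ 2 + 2 * c * v 0 * v 1 + B * v 1 ^ 2 := by
    simp [mulVec, dotProduct, Fin.sum_univ_two]; ring
  rw [hq]
  rcases hA.eq_or_lt with rfl | hA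
  · obtain rfl : c = 0 := by nlinarith [sq_nonneg c]
    nlinarith [mul_nonneg hB (sq_nonneg (v 1))]
  · nlinarith [sq_nonneg (A * v 0 + c * v 1), mul_nonneg (sub_nonneg.2 h) (sq_nonneg (v 1))]

lemma sqrt_le_sqrt_add_sqrt_of_quadratic_nonneg {x y z : ℝ} (hy : 0 ≤ y) (hz : 0 ≤ z)
    (h : 0 ≤ (y - z) ^ 2 + 2 * x * (y + z) - 3 * x ^ 2) : √x ≤ √y + √z := by
  by_contra! hlt
  obtain ⟨u, hu, rfl⟩ : ∃ u, 0 ≤ u ∧ y = u ^ 2 := ⟨√y, Real.sqrt_nonneg y, (Real.sq_sqrt hy).symm⟩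
  obtain ⟨v, hv, rfl⟩ : ∃ v, 0 ≤ v ∧ z = v ^ 2 := ⟨√z, Real.sqrt_nonneg z, (Real.sq_sqrt hz).symm⟩
  rw [Real.sqrt_sq hu, Real.sqrt_sq hv] at hlt
  have hx : (u + v) ^ 2 < x := (Real.lt_sqrt (by positivity)).1 hlt
  -- The quadratic is concave in `x`, equals `-8uv(u + v)²` at `x = (u + v)²`,
  -- and is decreasing from there on.
  nlinarith [mul_nonneg hu hv, mul_nonneg (mul_nonneg hu hv) (sq_nonneg (u + v))]

lemma sq_mul_add_sub_sq_le_of_sqrt_triangle {x y z : ℝ} (hx : 0 ≤ x) (hy : 0 ≤ y) (hz : 0 ≤ z)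
    (h₁ : √x ≤ √y + √z) (h₂ : √y ≤ √z + √x) (h₃ : √z ≤ √x + √y) :
    (x * (y + z) - (y - z) ^ 2) ^ 2 ≤ 4 * x ^ 2 * (y * z) := by
  obtain ⟨t, ht, rfl⟩ : ∃ t, 0 ≤ t ∧ x = t ^ 2 := ⟨√x, Real.sqrt_nonneg x, (Real.sq_sqrt hx).symm⟩
  obtain ⟨u, hu, rfl⟩ : ∃ u, 0 ≤ u ∧ y = u ^ 2 := ⟨√y, Real.sqrt_nonneg y, (Real.sq_sqrt hy).symm⟩
  obtain ⟨v, hv, rfl⟩ : ∃ v, 0 ≤ v ∧ z = v ^ 2 := ⟨√z, Real.sqrt_nonneg z, (Real.sq_sqrt hz).symm⟩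
  simp only [Real.sqrt_sq ht, Real.sqrt_sq hu, Real.sqrt_sq hv] at h₁ h₂ h₃
  have hsum : t ^ 2 ≤ (u + v) ^ 2 := pow_le_pow_left₀ ht h₁ 2
  have hdiff : (u - v) ^ 2 ≤ t ^ 2 := sq_le_sq' (by linarith) (by linarith)
  have hfactor : 4 * (t ^ 2) ^ 2 * (u ^ 2 * v ^ 2)
        - (t ^ 2 * (u ^ 2 + v ^ 2) - (u ^ 2 - v ^ 2) ^ 2) ^ 2
      = ((u - v) * (u + v)) ^ 2 * (((u + v) ^ 2 - t ^ 2) * (t ^ 2 - (u - v) ^ 2)) := by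
    ring
  nlinarith [mul_nonneg (sq_nonneg ((u - v) * (u + v)))
    (mul_nonneg (sub_nonneg.2 hsum) (sub_nonneg.2 hdiff))]

section

variable (s : Fin 3 → ℝ) (r : Fin 3)

lemma Spoly_eq_rotate :
    Spoly s = 2 * (s r * s (r + 1) + s r * s (r + 2) + s (r + 1) * s (r + 2))
      - (s r ^ 2 + s (r + 1) ^ 2 + s (r + 2) ^ 2) := by
  fin_cases r <;> simp [Spoly] <;> ring

variable {s r}

lemma ppoly_eq_mul_scalarBlock_a0 (hr : s r ≠ 0) :
    ppoly s r = s r * (s (r + 1) + s (r + 2) - s r + Spoly s / (2 * s r) + 3 * a0 s r) := by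
  rw [Spoly_eq_rotate s r, ppoly, a0]
  field_simp
  ring

lemma offDiagonal_a0 (hr : s r ≠ 0) :
    -Spoly s / s r + 2 * a0 s r
      = 2 * ((s (r + 1) - s (r + 2)) ^ 2 - s r * (s (r + 1) + s (r + 2))) / s r := by
  rw [Spoly_eq_rotate s r, a0]
  field_simp
  ring

lemma Bmat_a0_posSemidef (hs : ∀ r, 0 < s r) (hp : ∀ r, 0 ≤ ppoly s r) :
    (Bmat s (a0 s) 0 r).PosSemidef := by
  have triangle (r : Fin 3) : √(s r) ≤ √(s (r + 1)) + √(s (r + 2)) :=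
    sqrt_le_sqrt_add_sqrt_of_quadratic_nonneg (hs _).le (hs _).le (hp r)
  have triangle₁ : √(s (r + 1)) ≤ √(s (r + 2)) + √(s r) := by
    simpa [show r + 1 + 1 = r + 2 by grind, show r + 1 + 2 = r by grind] using triangle (r + 1)
  have triangle₂ : √(s (r + 2)) ≤ √(s r) + √(s (r + 1)) := by
    simpa [show r + 2 + 1 = r by grind, show r + 2 + 2 = r + 1 by grind] using triangle (r + 2)
  have hdet := sq_mul_add_sub_sq_le_of_sqrt_triangle (hs r).le (hs (r + 1)).le (hs (r + 2)).le
    (triangle r) triangle₁ triangle₂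
  simp only [Bmat, Pi.zero_apply, sub_zero, add_zero, offDiagonal_a0 (hs r).ne']
  refine Matrix.posSemidef_of_sq_le_mul (by linarith [hs (r + 1)]) (by linarith [hs (r + 2)]) ?_
  rw [div_pow, div_le_iff₀ (pow_pos (hs r) 2)]
  nlinarith [hdet]

end

/-- Matrix-level statement: `g_s` on `W¹²` has strongly nonnegative curvature iff it
has `sec ≥ 0`. -/
theorem stronglyNonneg_W12_iff (s : Fin 3 → ℝ) (hs : ∀ r, 0 < s r) :
    (∀ r, 0 ≤ ppoly s r) ↔
      ∃ a b : Fin 3 → ℝ, ∀ r : Fin 3,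
        (Bmat s a b r).PosSemidef ∧
        0 ≤ s (r + 1) + s (r + 2) - s r + Spoly s / (2 * s r) + 3 * a r ∧
        a r ≤ a0 s r := by
  constructor
  · intro hp
    refine ⟨a0 s, 0, fun r ↦ ⟨Bmat_a0_posSemidef hs hp, ?_, le_rfl⟩⟩
    exact nonneg_of_mul_nonneg_right (ppoly_eq_mul_scalarBlock_a0 (hs r).ne' ▸ hp r) (hs r)
  · rintro ⟨a, b, hab⟩ r
    obtain ⟨-, hscalar, ha⟩ := hab r
    rw [ppoly_eq_mul_scalarBlock_a0 (hs r).ne']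
    exact mul_nonneg (hs r).le (by linarith)
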